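/- arXiv:2602.00512 — 2 statements merged into one kernel-verified Lean document; each statement's English description precedes it below -/
import Mathlib

section
/- Let p > 0, q > 0 and define f(x) = (1/2)((q x − p x³)² + q − 3p x²) for x ∈ ℝ. Then f attains its minimum over ℝ, the minimum value equals −q/2 − √(q²+9p)/3 + q³/(27p) − q²·√(q²+9p)/(27p), and the minimum is attained at the points x = ±√((2q + √(q²+9p))/(3p)). -/
/-!
Write `s = √(q² + 9p)` and `u = x²`. As a cubic in `u`, `54p (f x − m)` factors as
`(3pu − 2q − s)² (3pu + 2s − 2q)`: it has a double root at the critical value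
`u = (2q + s)/(3p)`, and its last factor is nonnegative because `s ≥ q`.
-/

namespace DoubleWell

noncomputable section

variable {p q : ℝ}

def potential (p q x : ℝ) : ℝ := (1/2) * ((q*x - p*x^3)^2 + q - 3*p*x^2)

def minValue (p q : ℝ) : ℝ :=
  -q/2 - √(q^2 + 9*p)/3 + q^3/(27*p) - q^2 * √(q^2 + 9*p)/(27*p)

def minimizer (p q : ℝ) : ℝ := √((2*q + √(q^2 + 9*p))/(3*p))

lemma potential_neg (x : ℝ) : potential p q (-x) = potential p q x := by
  unfold potential; ring

lemma mul_potential_sub_minValue (hp : p ≠ 0) (hpq : 0 ≤ q^2 + 9*p) (x : ℝ) :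
    54*p*(potential p q x - minValue p q)
      = (3*p*x^2 - 2*q - √(q^2 + 9*p))^2 * (3*p*x^2 + 2*√(q^2 + 9*p) - 2*q) := by
  set s := √(q^2 + 9*p) with hs_def
  have hs : s^2 = q^2 + 9*p := Real.sq_sqrt hpq
  have hm : 54*p*minValue p q = -(27*p*q) - 18*p*s + 2*q^3 - 2*q^2*s := by
    simp only [minValue, ← hs_def]; field_simp; ring
  rw [mul_sub, hm]
  unfold potential
  linear_combination (3*(3*p*x^2 - 2*q) - 2*s) * hs

lemma minValue_le_potential (hp : 0 < p) (x : ℝ) : minValue p q ≤ potential p q x := by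
  have hpq : 0 ≤ q^2 + 9*p := by positivity
  have hqs : q ≤ √(q^2 + 9*p) :=
    Real.le_sqrt_of_sq_le (by linarith)
  have hsq : 0 ≤ √(q^2 + 9*p) := Real.sqrt_nonneg _
  have hfactor : 0 ≤ 54*p*(potential p q x - minValue p q) := by
    rw [mul_potential_sub_minValue hp.ne' hpq]
    have : 0 ≤ 3*p*x^2 + 2*√(q^2 + 9*p) - 2*q := by nlinarith [sq_nonneg x]
    positivity
  nlinarith

lemma potential_minimizer (hp : 0 < p) (hq : 0 ≤ q) :
    potential p q (minimizer p q) = minValue p q := by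
  have hpq : 0 ≤ q^2 + 9*p := by positivity
  have hsq : minimizer p q ^ 2 = (2*q + √(q^2 + 9*p))/(3*p) :=
    Real.sq_sqrt (by positivity)
  have hroot : 3*p*minimizer p q^2 - 2*q - √(q^2 + 9*p) = 0 := by
    rw [hsq]; field_simp; ring
  have h := mul_potential_sub_minValue hp.ne' hpq (minimizer p q)
  rw [hroot] at h
  have : potential p q (minimizer p q) - minValue p q = 0 := by
    simpa [hp.ne'] using h
  linarith

end

end DoubleWell

open DoubleWell in
/-- For `p, q > 0` and `f(x) = (1/2)((qx − px³)² + q − 3px²)`,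
`f` attains its minimum over `ℝ`; the minimum value equals
`−q/2 − √(q²+9p)/3 + q³/(27p) − q²√(q²+9p)/(27p)`, attained at
`x = ±√((2q + √(q²+9p))/(3p))`. -/
theorem stmt8 (p q : ℝ) (hp : 0 < p) (hq : 0 < q) :
    let f : ℝ → ℝ := fun x => (1/2) * ((q*x - p*x^3)^2 + q - 3*p*x^2)
    let m : ℝ := -q/2 - Real.sqrt (q^2 + 9*p)/3 + q^3/(27*p)
        - q^2 * Real.sqrt (q^2 + 9*p)/(27*p)
    let ζ : ℝ := Real.sqrt ((2*q + Real.sqrt (q^2 + 9*p))/(3*p))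
    IsLeast (Set.range f) m ∧ f ζ = m ∧ f (-ζ) = m := by
  show IsLeast (Set.range (potential p q)) (minValue p q)
    ∧ potential p q (minimizer p q) = minValue p q
    ∧ potential p q (-minimizer p q) = minValue p q
  have hζ := potential_minimizer hp hq.le
  refine ⟨⟨⟨_, hζ⟩, ?_⟩, hζ, by rw [potential_neg, hζ]⟩
  rintro _ ⟨x, rfl⟩
  exact minValue_le_potential hp x
end

section
/- Let p > 0, q > 0 and define f(x) = (1/2)((q x − p x³)² + q − 3p x²) for x ∈ ℝ. Let L ≤ U be real numbers and define the finite candidate set C = {L, U} ∪ ({0} ∩ [L,U]) ∪ D, where D = {ζ, −ζ} ∩ [L,U] with ζ = √((2q − √(q²+9p))/(3p)) if q² > 3p, and D = ∅ otherwise. Then sup_{x ∈ [L,U]} f(x) = max_{x ∈ C} f(x). -/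
open Set Topology

/-!
At an interior maximiser of `f` on `[L, U]` the derivative
`f' x = 3 p² x (x² - t₁) (x² - t₂)`, with `t₁,₂ = (2q ∓ √(q² + 9p)) / (3p)`, vanishes.
The root `x = 0` and the roots `x = ±√t₁ = ±ζ` (which are nonzero only when `q² > 3p`) lie in the
candidate set, while `f` is strictly increasing on `[√t₂, ∞)` and even, so `±√t₂` are not local
maxima. Hence `f` attains its maximum over `[L, U]` at a candidate point.
-/

theorem sSup_image_eq_of_isMaxOn {α β : Type*} [ConditionallyCompleteLattice β] {f : α → β}
    {s t : Set α} {a : α} (hts : t ⊆ s) (ha : a ∈ t) (hmax : IsMaxOn f s a) :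
    sSup (f '' s) = sSup (f '' t) := by
  have hs : IsGreatest (f '' s) (f a) := ⟨mem_image_of_mem f (hts ha), forall_mem_image.2 hmax⟩
  have ht : IsGreatest (f '' t) (f a) :=
    ⟨mem_image_of_mem f ha, forall_mem_image.2 fun x hx => hmax (hts hx)⟩
  rw [hs.csSup_eq, ht.csSup_eq]

theorem IsMaxOn.eq_left_or_eq_right_or_isLocalMax {α β : Type*} [TopologicalSpace α]
    [LinearOrder α] [OrderTopology α] [Preorder β] {f : α → β} {a b x : α}
    (hmax : IsMaxOn f (Icc a b) x) (hx : x ∈ Icc a b) : x = a ∨ x = b ∨ IsLocalMax f x := by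
  rcases eq_or_lt_of_le hx.1 with h | ha
  · exact Or.inl h.symm
  rcases eq_or_lt_of_le hx.2 with h | hb
  · exact Or.inr (Or.inl h)
  exact Or.inr (Or.inr (hmax.isLocalMax (Icc_mem_nhds ha hb)))

theorem StrictMonoOn.not_isLocalMax_of_Ici {α β : Type*} [TopologicalSpace α] [LinearOrder α]
    [OrderTopology α] [DenselyOrdered α] [NoMaxOrder α] [Preorder β] {f : α → β} {a : α}
    (hf : StrictMonoOn f (Ici a)) : ¬IsLocalMax f a := by
  intro hmax
  have hright : ∀ᶠ y in 𝓝[>] a, f y ≤ f a := hmax.filter_mono nhdsWithin_le_nhds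
  obtain ⟨y, hle, hgt⟩ := (hright.and self_mem_nhdsWithin).exists
  exact (hf self_mem_Ici (mem_Ici.2 hgt.le) hgt).not_ge hle

noncomputable section

namespace DoubleWell

variable {p q : ℝ}

def phi (p q x : ℝ) : ℝ := (1/2) * ((q*x - p*x^3)^2 + q - 3*p*x^2)

def criticalSqLow (p q : ℝ) : ℝ := (2*q - √(q^2 + 9*p)) / (3*p)

def criticalSqHigh (p q : ℝ) : ℝ := (2*q + √(q^2 + 9*p)) / (3*p)

def zeta (p q : ℝ) : ℝ := √(criticalSqLow p q)

theorem phi_neg (p q x : ℝ) : phi p q (-x) = phi p q x := by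
  simp only [phi]; ring

theorem hasDerivAt_phi (hp : 0 < p) (x : ℝ) :
    HasDerivAt (phi p q)
      (3*p^2 * x * (x^2 - criticalSqLow p q) * (x^2 - criticalSqHigh p q)) x := by
  have h := (((((hasDerivAt_id x).const_mul q).sub ((hasDerivAt_pow 3 x).const_mul p)).pow 2
    |>.add_const q).sub ((hasDerivAt_pow 2 x).const_mul (3*p))).const_mul (1/2 : ℝ)
  refine h.congr_deriv ?_
  simp only [criticalSqLow, criticalSqHigh, id, Pi.sub_apply]
  have hs : √(q^2 + 9*p) ^ 2 = q^2 + 9*p := Real.sq_sqrt (by positivity)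
  generalize √(q^2 + 9*p) = s at hs ⊢
  field_simp
  linear_combination (2*x) * hs

theorem continuous_phi (p q : ℝ) : Continuous (phi p q) := by
  unfold phi; fun_prop

theorem criticalSqLow_lt_criticalSqHigh (hp : 0 < p) : criticalSqLow p q < criticalSqHigh p q := by
  have : 0 < √(q^2 + 9*p) := Real.sqrt_pos.2 (by positivity)
  unfold criticalSqLow criticalSqHigh
  gcongr
  linarith

theorem lt_sq_of_criticalSqLow_pos (hp : 0 < p) (h : 0 < criticalSqLow p q) : 3*p < q^2 := by
  have hs : √(q^2 + 9*p) ^ 2 = q^2 + 9*p := Real.sq_sqrt (by positivity)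
  have hlt : √(q^2 + 9*p) < 2*q := by
    unfold criticalSqLow at h
    linarith [(div_pos_iff_of_pos_right (by positivity : (0:ℝ) < 3*p)).1 h]
  have hsq := pow_lt_pow_left₀ hlt (Real.sqrt_nonneg _) two_ne_zero
  rw [hs] at hsq
  linarith

theorem strictMonoOn_phi_Ici (hp : 0 < p) {a : ℝ} (ha : 0 ≤ a) (hta : criticalSqHigh p q ≤ a^2) :
    StrictMonoOn (phi p q) (Ici a) := by
  refine strictMonoOn_of_deriv_pos (convex_Ici a) (continuous_phi p q).continuousOn fun x hx => ?_
  rw [interior_Ici] at hx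
  have hx0 : 0 < x := ha.trans_lt hx
  have hxa : a^2 < x^2 := by gcongr; exact hx
  have hlt := criticalSqLow_lt_criticalSqHigh (q := q) hp
  have hhigh : 0 < x^2 - criticalSqHigh p q := by linarith
  have hlow : 0 < x^2 - criticalSqLow p q := by linarith
  rw [(hasDerivAt_phi hp x).deriv]
  positivity

theorem not_isLocalMax_phi (hp : 0 < p) {x : ℝ} (hx : x^2 = criticalSqHigh p q) :
    ¬IsLocalMax (phi p q) x := by
  wlog hx0 : 0 ≤ x generalizing x
  · intro hmax
    refine this (x := -x) (by rw [neg_sq, hx]) (by linarith) ?_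
    rw [← neg_neg x] at hmax
    have h := hmax.comp_continuous continuous_neg.continuousAt
    rwa [show phi p q ∘ Neg.neg = phi p q from funext (phi_neg p q)] at h
  exact (strictMonoOn_phi_Ici hp hx0 hx.ge).not_isLocalMax_of_Ici

theorem eq_zero_or_eq_zeta_of_isLocalMax (hp : 0 < p) {x : ℝ} (hmax : IsLocalMax (phi p q) x) :
    x = 0 ∨ 3*p < q^2 ∧ (x = zeta p q ∨ x = -zeta p q) := by
  have hcrit := hmax.hasDerivAt_eq_zero (hasDerivAt_phi hp x)
  simp only [mul_eq_zero, sub_eq_zero, hp.ne', false_or, or_false, OfNat.ofNat_ne_zero,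
    pow_eq_zero_iff, ne_eq, not_false_eq_true] at hcrit
  rcases hcrit with (hx0 | hlow) | hhigh
  · exact Or.inl hx0
  · rcases eq_or_ne x 0 with hx0 | hx0
    · exact Or.inl hx0
    have hpos : 0 < criticalSqLow p q := hlow ▸ by positivity
    refine Or.inr ⟨lt_sq_of_criticalSqLow_pos hp hpos, ?_⟩
    rw [← sq_eq_sq_iff_eq_or_eq_neg, zeta, Real.sq_sqrt hpos.le, hlow]
  · exact absurd hmax (not_isLocalMax_phi hp hhigh)

end DoubleWell

end

open DoubleWell in
theorem stmt11_general (p q : ℝ) (hp : 0 < p) (L U : ℝ) (hLU : L ≤ U) :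
    let f : ℝ → ℝ := fun x => (1/2) * ((q*x - p*x^3)^2 + q - 3*p*x^2)
    let ζ : ℝ := Real.sqrt ((2*q - Real.sqrt (q^2 + 9*p))/(3*p))
    let D : Set ℝ := if q^2 > 3*p then ({ζ, -ζ} : Set ℝ) ∩ Set.Icc L U else (∅ : Set ℝ)
    let C : Set ℝ := ({L, U} : Set ℝ) ∪ (({0} : Set ℝ) ∩ Set.Icc L U) ∪ D
    sSup (f '' Set.Icc L U) = sSup (f '' C) := by
  intro f ζ D C
  have hD : D ⊆ Icc L U := by
    unfold D; split_ifs
    exacts [inter_subset_right, empty_subset _]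
  have hC : C ⊆ Icc L U :=
    union_subset (union_subset (pair_subset ⟨le_rfl, hLU⟩ ⟨hLU, le_rfl⟩) inter_subset_right) hD
  obtain ⟨x, hx, hmax⟩ :=
    isCompact_Icc.exists_isMaxOn (nonempty_Icc.2 hLU) (continuous_phi p q).continuousOn
  refine sSup_image_eq_of_isMaxOn hC ?_ hmax
  rcases hmax.eq_left_or_eq_right_or_isLocalMax hx with rfl | rfl | hloc
  · exact Or.inl (Or.inl (Or.inl rfl))
  · exact Or.inl (Or.inl (Or.inr rfl))
  rcases eq_zero_or_eq_zeta_of_isLocalMax hp hloc with hx0 | ⟨hq, hζ⟩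
  · exact Or.inl (Or.inr ⟨hx0, hx⟩)
  · refine Or.inr ?_
    simp only [D, if_pos hq]
    exact ⟨hζ, hx⟩

/-- For `p, q > 0`, `f(x) = (1/2)((qx − px³)² + q − 3px²)`, and
`L ≤ U`, the supremum of `f` over `[L,U]` equals its maximum over the finite
candidate set `C = {L,U} ∪ ({0} ∩ [L,U]) ∪ D`, where `D = {ζ, −ζ} ∩ [L,U]`
with `ζ = √((2q − √(q²+9p))/(3p))` if `q² > 3p`, and `D = ∅` otherwise. -/
theorem stmt11 (p q : ℝ) (hp : 0 < p) (hq : 0 < q) (L U : ℝ) (hLU : L ≤ U) :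
    let f : ℝ → ℝ := fun x => (1/2) * ((q*x - p*x^3)^2 + q - 3*p*x^2)
    let ζ : ℝ := Real.sqrt ((2*q - Real.sqrt (q^2 + 9*p))/(3*p))
    let D : Set ℝ := if q^2 > 3*p then ({ζ, -ζ} : Set ℝ) ∩ Set.Icc L U else (∅ : Set ℝ)
    let C : Set ℝ := ({L, U} : Set ℝ) ∪ (({0} : Set ℝ) ∩ Set.Icc L U) ∪ D
    sSup (f '' Set.Icc L U) = sSup (f '' C) :=
  stmt11_general p q hp L U hLU
end
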